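/- Let (a_n)_{n≥0}, (b_n)_{n≥1} be reals with a_0 = 1, a_n > 0, satisfying a_m = ∑_{n=1}^m b_n a_{m−n} for all m ≥ 1. Fix N ≥ 1 and let S = (S_1,…,S_d) be the compression of the multiplication tuple M_z to the space P_N of polynomials of degree ≤ N with the inner product ⟨z^α,z^β⟩ = δ_{αβ}(1/a_{|α|})(α!/|α|!). Then I − ∑_{n=1}^N b_n ∑_{|α|=n} (n!/α!) S^α (S*)^α equals the orthogonal projection onto the constants ℂ·1; in particular it is positive semidefinite. -/

import Mathlib

open scoped ComplexOrder

/-- The unitarily invariant inner product on polynomials determined by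
`⟨zᵅ, zᵝ⟩ = δ_{αβ} (1/a_{|α|}) α!/|α|!` (conjugate-linear in the first argument). -/
noncomputable def uiInner (d : ℕ) (a : ℕ → ℝ) (p q : MvPolynomial (Fin d) ℂ) : ℂ :=
  ∑ α ∈ p.support ∪ q.support,
    (starRingEnd ℂ) (MvPolynomial.coeff α p) * MvPolynomial.coeff α q *
      ((((∏ j, Nat.factorial (α j) : ℕ) : ℝ) / (Nat.factorial (∑ j, α j)) / a (∑ j, α j) : ℝ) : ℂ)

/-!
On monomials, `S j` raises the exponent `β` by `e_j` (truncating above degree `N`) and, being its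
adjoint, `S* j` lowers it by `e_j` with the factor `w β / w (β - e_j)`, where `w β = ⟨z^β, z^β⟩`.
Hence `S^α S*^α` is diagonal, `z^β ↦ [α ≤ β] (w β / w (β - α)) z^β`, and after weighting by the
multinomial coefficients the sum over `|α| = n` collapses, by the multivariate Vandermonde
identity, to `a_{m-n} / a_m` with `m = |β|`. The convolution relation gives
`∑_{n=1}^m b_n a_{m-n} / a_m = 1` for `m ≥ 1`, so the defect operator kills every monomial of
positive degree and fixes the constants.
-/

open MvPolynomial Finset

theorem totalDegree_monomial_le_degree {R σ : Type*} [CommSemiring R] (β : σ →₀ ℕ) (c : R) :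
    (monomial β c).totalDegree ≤ β.degree :=
  totalDegree_monomial_le β c

theorem homogeneousComponent_monomial {R σ : Type*} [CommSemiring R] (n : ℕ) (β : σ →₀ ℕ) (c : R) :
    homogeneousComponent n (monomial β c) = if n = β.degree then monomial β c else 0 :=
  homogeneousComponent_of_mem (isHomogeneous_monomial c rfl)

-- `uiWeight a β = uiInner d a (monomial β 1) (monomial β 1)`
noncomputable def uiWeight (a : ℕ → ℝ) {d : ℕ} (β : Fin d →₀ ℕ) : ℝ :=
  (∏ j, (β j).factorial : ℕ) / β.degree.factorial / a β.degree

section Inner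

variable {d : ℕ} {a : ℕ → ℝ}

theorem uiWeight_pos (hap : ∀ k, 0 < a k) (β : Fin d →₀ ℕ) : 0 < uiWeight a β := by
  unfold uiWeight
  have := Nat.factorial_pos β.degree
  have : 0 < ∏ j, (β j).factorial := prod_pos fun j _ => Nat.factorial_pos _
  exact div_pos (div_pos (by exact_mod_cast this) (by positivity)) (hap _)

theorem uiInner_eq_sum_support_right (p q : MvPolynomial (Fin d) ℂ) :
    uiInner d a p q = ∑ α ∈ q.support, starRingEnd ℂ (coeff α p) * coeff α q * uiWeight a α := by
  rw [uiInner, ← sum_subset (subset_union_right (s₁ := p.support))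
    fun α _ hα => by simp [notMem_support_iff.1 hα]]
  simp only [uiWeight, Finsupp.degree_eq_sum]

theorem uiInner_monomial_right (p : MvPolynomial (Fin d) ℂ) (γ : Fin d →₀ ℕ) (c : ℂ) :
    uiInner d a p (monomial γ c) = starRingEnd ℂ (coeff γ p) * c * uiWeight a γ := by
  classical
  rw [uiInner_eq_sum_support_right]
  by_cases hc : c = 0
  · simp [hc]
  · rw [support_monomial, if_neg hc, sum_singleton, coeff_monomial, if_pos rfl]

theorem uiInner_zero_right (p : MvPolynomial (Fin d) ℂ) : uiInner d a p 0 = 0 := by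
  simp [uiInner_eq_sum_support_right]

theorem uiInner_conj_symm (p q : MvPolynomial (Fin d) ℂ) :
    starRingEnd ℂ (uiInner d a p q) = uiInner d a q p := by
  simp only [uiInner, map_sum, union_comm p.support]
  refine sum_congr rfl fun α _ => ?_
  simp only [map_mul, Complex.conj_conj, Complex.conj_ofReal]
  ring

theorem uiInner_homogeneousComponent_zero_nonneg (hap : ∀ k, 0 < a k)
    (p : MvPolynomial (Fin d) ℂ) : 0 ≤ uiInner d a (homogeneousComponent 0 p) p := by
  rw [homogeneousComponent_zero, C_apply, ← uiInner_conj_symm, uiInner_monomial_right,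
    map_mul, map_mul, Complex.conj_conj, Complex.conj_ofReal, Complex.mul_conj, ← Complex.ofReal_mul]
  exact Complex.zero_le_real.2 (mul_nonneg (Complex.normSq_nonneg _) (uiWeight_pos hap 0).le)

theorem eq_of_uiInner_monomial_eq (hap : ∀ k, 0 < a k) {N : ℕ} {r r' : MvPolynomial (Fin d) ℂ}
    (hr : r.totalDegree ≤ N) (hr' : r'.totalDegree ≤ N)
    (h : ∀ γ : Fin d →₀ ℕ, γ.degree ≤ N →
      uiInner d a r (monomial γ 1) = uiInner d a r' (monomial γ 1)) : r = r' := by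
  ext γ
  rcases le_or_gt γ.degree N with hγ | hγ
  · have hw : (uiWeight a γ : ℂ) ≠ 0 := by exact_mod_cast (uiWeight_pos hap γ).ne'
    have := h γ hγ
    simp only [uiInner_monomial_right, mul_one] at this
    exact (starRingEnd ℂ).injective (mul_right_cancel₀ hw this)
  · rw [coeff_eq_zero_of_totalDegree_lt (hr.trans_lt hγ),
      coeff_eq_zero_of_totalDegree_lt (hr'.trans_lt hγ)]

end Inner

theorem List.prod_ofFn_pow_induction {M A : Type*} [Monoid M] [AddCommMonoid A]
    (P : M → A → Prop) (one : P 1 0) (mul : ∀ x y γ δ, P x γ → P y δ → P (x * y) (γ + δ))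
    {d : ℕ} (T : Fin d → M) (γ : Fin d → A) (hT : ∀ j, P (T j) (γ j)) (α : Fin d → ℕ) :
    P (List.ofFn fun j => T j ^ α j).prod (∑ j, α j • γ j) := by
  have pow : ∀ x δ k, P x δ → P (x ^ k) (k • δ) := by
    intro x δ k h
    induction k with
    | zero => simpa using one
    | succ k ih => simpa [pow_succ, succ_nsmul] using mul _ _ _ _ ih h
  induction d with
  | zero => simpa using one
  | succ d ih =>
    rw [List.ofFn_succ, List.prod_cons, Fin.sum_univ_succ]
    exact mul _ _ _ _ (pow _ _ _ (hT 0)) (ih _ _ (fun j => hT j.succ) _)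

theorem Finsupp.sum_nsmul_single_one {d : ℕ} (α : Fin d → ℕ) :
    ∑ j, α j • Finsupp.single j 1 = Finsupp.equivFunOnFinite.symm α := by
  simp [Finsupp.equivFunOnFinite_symm_eq_sum]

section Shifts

variable {d : ℕ} (N : ℕ) (a : ℕ → ℝ)

def RaisesBy (T : Module.End ℂ (MvPolynomial (Fin d) ℂ)) (γ : Fin d →₀ ℕ) : Prop :=
  ∀ (β : Fin d →₀ ℕ) (c : ℂ), β.degree + γ.degree ≤ N → T (monomial β c) = monomial (β + γ) c

def LowersBy (T : Module.End ℂ (MvPolynomial (Fin d) ℂ)) (γ : Fin d →₀ ℕ) : Prop :=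
  ∀ (β : Fin d →₀ ℕ) (c : ℂ), β.degree ≤ N →
    T (monomial β c) =
      if γ ≤ β then ((uiWeight a β / uiWeight a (β - γ) : ℝ) : ℂ) • monomial (β - γ) c else 0

variable {N a}

theorem raisesBy_prod_ofFn {T : Fin d → Module.End ℂ (MvPolynomial (Fin d) ℂ)}
    (hT : ∀ j, RaisesBy N (T j) (Finsupp.single j 1)) (α : Fin d → ℕ) :
    RaisesBy N (List.ofFn fun j => T j ^ α j).prod (Finsupp.equivFunOnFinite.symm α) := by
  rw [← Finsupp.sum_nsmul_single_one]
  refine List.prod_ofFn_pow_induction _ (fun β c _ => by simp) ?_ T _ hT α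
  intro x y γ δ hx hy β c hβ
  rw [map_add] at hβ
  rw [Module.End.mul_apply, hy β c (by omega), hx _ c (by rw [map_add]; omega), add_assoc,
    add_comm δ]

theorem lowersBy_prod_ofFn (hap : ∀ k, 0 < a k) {T : Fin d → Module.End ℂ (MvPolynomial (Fin d) ℂ)}
    (hT : ∀ j, LowersBy N a (T j) (Finsupp.single j 1)) (α : Fin d → ℕ) :
    LowersBy N a (List.ofFn fun j => T j ^ α j).prod (Finsupp.equivFunOnFinite.symm α) := by
  rw [← Finsupp.sum_nsmul_single_one]
  refine List.prod_ofFn_pow_induction _ (fun β c _ => ?_) ?_ T _ hT α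
  · simp [div_self (uiWeight_pos hap β).ne']
  intro x y γ δ hx hy β c hβ
  rw [Module.End.mul_apply, hy β c hβ]
  by_cases hδ : δ ≤ β
  · rw [if_pos hδ, map_smul, hx _ c ((Finsupp.degree_mono tsub_le_self).trans hβ)]
    simp only [le_tsub_iff_right hδ]
    split_ifs
    · rw [smul_smul, tsub_tsub, add_comm δ, ← Complex.ofReal_mul,
        div_mul_div_cancel₀ (uiWeight_pos hap _).ne']
    · rw [smul_zero]
  · rw [if_neg hδ, map_zero, if_neg fun h => hδ (le_trans le_add_self h)]

end Shifts

section Compression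

variable {d N : ℕ} {a : ℕ → ℝ} {S Sstar : Fin d → Module.End ℂ (MvPolynomial (Fin d) ℂ)}

theorem apply_monomial_of_compression
    (hS : ∀ (j : Fin d) (p : MvPolynomial (Fin d) ℂ), p.totalDegree ≤ N →
      S j p = ∑ n ∈ Finset.range (N + 1), homogeneousComponent n (X j * p))
    (j : Fin d) {β : Fin d →₀ ℕ} (c : ℂ) (hβ : β.degree ≤ N) :
    S j (monomial β c) = if β.degree + 1 ≤ N then monomial (β + Finsupp.single j 1) c else 0 := by
  rw [hS j _ ((totalDegree_monomial_le_degree β c).trans hβ), X, monomial_mul, one_mul,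
    add_comm (Finsupp.single j 1)]
  simp only [homogeneousComponent_monomial, map_add, Finsupp.degree_single, sum_ite_eq',
    mem_range, Nat.lt_add_one_iff]

theorem raisesBy_of_compression
    (hS : ∀ (j : Fin d) (p : MvPolynomial (Fin d) ℂ), p.totalDegree ≤ N →
      S j p = ∑ n ∈ Finset.range (N + 1), homogeneousComponent n (X j * p))
    (j : Fin d) : RaisesBy N (S j) (Finsupp.single j 1) := by
  intro β c hβ
  rw [Finsupp.degree_single] at hβ
  rw [apply_monomial_of_compression hS j c (by omega), if_pos hβ]

theorem lowersBy_of_adjoint (hap : ∀ k, 0 < a k)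
    (hS : ∀ (j : Fin d) (p : MvPolynomial (Fin d) ℂ), p.totalDegree ≤ N →
      S j p = ∑ n ∈ Finset.range (N + 1), homogeneousComponent n (X j * p))
    (hSstarMem : ∀ (j : Fin d) (p : MvPolynomial (Fin d) ℂ), p.totalDegree ≤ N →
      (Sstar j p).totalDegree ≤ N)
    (hSstar : ∀ (j : Fin d) (p q : MvPolynomial (Fin d) ℂ),
      p.totalDegree ≤ N → q.totalDegree ≤ N →
      uiInner d a (Sstar j p) q = uiInner d a p (S j q))
    (j : Fin d) : LowersBy N a (Sstar j) (Finsupp.single j 1) := by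
  intro β c hβ
  have hmono : (monomial β c).totalDegree ≤ N := (totalDegree_monomial_le_degree β c).trans hβ
  refine eq_of_uiInner_monomial_eq hap (hSstarMem j _ hmono) ?_ fun γ hγ => ?_
  · split_ifs
    · exact (totalDegree_smul_le _ _).trans ((totalDegree_monomial_le_degree _ _).trans
        ((Finsupp.degree_mono tsub_le_self).trans hβ))
    · simp
  rw [hSstar j _ _ hmono ((totalDegree_monomial_le_degree γ 1).trans hγ),
    apply_monomial_of_compression hS j 1 hγ]
  by_cases hβγ : β = γ + Finsupp.single j 1
  · subst hβγ
    rw [map_add, Finsupp.degree_single] at hβ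
    rw [if_pos hβ, if_pos le_add_self, add_tsub_cancel_right]
    simp only [uiInner_monomial_right, coeff_smul, coeff_monomial, ↓reduceIte, smul_eq_mul,
      map_mul, Complex.conj_ofReal]
    have hw : (uiWeight a γ : ℂ) ≠ 0 := by exact_mod_cast (uiWeight_pos hap γ).ne'
    rw [Complex.ofReal_div]
    field_simp
  · have hne : ∀ h : Finsupp.single j 1 ≤ β, β - Finsupp.single j 1 ≠ γ := fun h h' =>
      hβγ ((tsub_eq_iff_eq_add_of_le h).1 h')
    split_ifs with h₁ h₂ h₂
    · simp [uiInner_monomial_right, coeff_monomial, hne h₂, hβγ]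
    · simp [uiInner_monomial_right, coeff_monomial, hβγ]
    · simp [uiInner_monomial_right, coeff_monomial, hne h₂, uiInner_zero_right]
    · simp [uiInner_monomial_right, uiInner_zero_right]

end Compression

theorem Finset.sum_piAntidiag_prod_choose {ι : Type*} [DecidableEq ι] (s : Finset ι)
    (β : ι → ℕ) (n : ℕ) :
    ∑ α ∈ s.piAntidiag n, ∏ j ∈ s, (β j).choose (α j) = (∑ j ∈ s, β j).choose n := by
  induction s using Finset.cons_induction generalizing n with
  | empty =>
    rcases Nat.eq_zero_or_pos n with rfl | hn
    · simp
    · simp [piAntidiag_empty_of_ne_zero hn.ne', Nat.choose_eq_zero_of_lt hn]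
  | cons i s hi ih =>
    rw [piAntidiag_cons hi n, sum_disjiUnion, sum_cons, Nat.add_choose_eq]
    refine sum_congr rfl fun p _ => ?_
    rw [sum_map, ← ih p.2, mul_sum]
    refine sum_congr rfl fun g hg => ?_
    have hgi : g i = 0 := by_contra fun h => hi ((mem_piAntidiag.1 hg).2 i h)
    rw [prod_cons]
    simp only [addRightEmbedding_apply]
    congr 1
    · simp [hgi]
    · exact prod_congr rfl fun j hj => by simp [show j ≠ i from fun h => hi (h ▸ hj)]

theorem Nat.multinomial_mul_prod_factorial {ι : Type*} (s : Finset ι) {α β : ι → ℕ}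
    (h : ∀ j ∈ s, α j ≤ β j) :
    Nat.multinomial s α * ∏ j ∈ s, (β j).factorial =
      (∑ j ∈ s, α j).factorial * (∏ j ∈ s, (β j).choose (α j)) *
        ∏ j ∈ s, (β j - α j).factorial := by
  rw [prod_congr rfl fun j hj => (Nat.choose_mul_factorial_mul_factorial (h j hj)).symm,
    ← Nat.multinomial_spec, prod_mul_distrib, prod_mul_distrib]
  ring

section Weights

variable {d : ℕ} {a : ℕ → ℝ}

theorem multinomial_mul_uiWeight_div (hap : ∀ k, 0 < a k) {n : ℕ} {α : Fin d → ℕ}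
    (hα : ∑ j, α j = n) (β : Fin d →₀ ℕ) :
    (Nat.multinomial univ α : ℝ) *
        (if Finsupp.equivFunOnFinite.symm α ≤ β then
          uiWeight a β / uiWeight a (β - Finsupp.equivFunOnFinite.symm α) else 0) =
      (∏ j, (β j).choose (α j) : ℕ) *
        (n.factorial * (β.degree - n).factorial * a (β.degree - n) /
          (β.degree.factorial * a β.degree)) := by
  set α' := Finsupp.equivFunOnFinite.symm α
  split_ifs with hle
  · have hαβ : ∀ j, α j ≤ β j := fun j => by simpa [α'] using hle j
    have hdeg : (β - α').degree = β.degree - n := by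
      have : α'.degree = n := by simpa [α', Finsupp.degree_eq_sum] using hα
      rw [← this, eq_tsub_iff_add_eq_of_le (Finsupp.degree_mono hle), ← map_add,
        tsub_add_cancel_of_le hle]
    have hkey : (Nat.multinomial univ α : ℝ) * (∏ j, (β j).factorial : ℕ) =
        n.factorial * (∏ j, (β j).choose (α j) : ℕ) * (∏ j, (β j - α j).factorial : ℕ) := by
      rw [← hα]; exact_mod_cast Nat.multinomial_mul_prod_factorial univ fun j _ => hαβ j
    have hsub : ∏ j, ((β - α') j).factorial = ∏ j, (β j - α j).factorial := by simp [α']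
    rw [uiWeight, uiWeight, hdeg, hsub]
    have := (hap β.degree).ne'
    have := (hap (β.degree - n)).ne'
    have : (∏ j, (β j - α j).factorial : ℕ) ≠ 0 := prod_ne_zero_iff.2 fun j _ => by positivity
    field_simp
    linear_combination hkey
  · obtain ⟨j, hj⟩ : ∃ j, β j < α j := by
      by_contra! h
      exact hle fun j => by simpa [α'] using h j
    rw [prod_eq_zero (mem_univ j) (Nat.choose_eq_zero_of_lt hj)]
    simp

theorem sum_multinomial_mul_uiWeight_div (hap : ∀ k, 0 < a k) (n : ℕ) (β : Fin d →₀ ℕ) :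
    ∑ α ∈ Finset.Nat.antidiagonalTuple d n, (Nat.multinomial univ α : ℝ) *
        (if Finsupp.equivFunOnFinite.symm α ≤ β then
          uiWeight a β / uiWeight a (β - Finsupp.equivFunOnFinite.symm α) else 0) =
      if n ≤ β.degree then a (β.degree - n) / a β.degree else 0 := by
  rw [sum_congr rfl fun α hα => multinomial_mul_uiWeight_div hap
    (Finset.Nat.mem_antidiagonalTuple.1 hα) β, ← sum_mul, ← Nat.cast_sum,
    ← Finset.piAntidiag_univ_fin_eq_antidiagonalTuple, sum_piAntidiag_prod_choose,
    ← Finsupp.degree_eq_sum]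
  split_ifs with hn
  · have hc : ((β.degree.choose n * n.factorial * (β.degree - n).factorial : ℕ) : ℝ) =
        β.degree.factorial := by exact_mod_cast Nat.choose_mul_factorial_mul_factorial hn
    have := (hap β.degree).ne'
    push_cast at hc
    field_simp
    linear_combination a (β.degree - n) * hc
  · simp [Nat.choose_eq_zero_of_lt (not_le.1 hn)]

end Weights

theorem RaisesBy.apply_lowersBy_monomial {d N : ℕ} {a : ℕ → ℝ}
    {R L : Module.End ℂ (MvPolynomial (Fin d) ℂ)} {γ : Fin d →₀ ℕ}
    (hR : RaisesBy N R γ) (hL : LowersBy N a L γ) {β : Fin d →₀ ℕ} (c : ℂ) (hβ : β.degree ≤ N) :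
    R (L (monomial β c)) =
      ((if γ ≤ β then uiWeight a β / uiWeight a (β - γ) else 0 : ℝ) : ℂ) • monomial β c := by
  rw [hL β c hβ]
  split_ifs with h
  · rw [map_smul, hR _ _ (by rwa [← map_add, tsub_add_cancel_of_le h]), tsub_add_cancel_of_le h]
  · simp

theorem sum_Icc_mul_ite_div_eq {a b : ℕ → ℝ} (hap : ∀ k, 0 < a k)
    (hconv : ∀ m : ℕ, 1 ≤ m → a m = ∑ n ∈ Finset.Icc 1 m, b n * a (m - n)) {m N : ℕ}
    (hm : m ≤ N) :
    ∑ n ∈ Icc 1 N, b n * (if n ≤ m then a (m - n) / a m else 0) = if m = 0 then 0 else 1 := by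
  split_ifs with hm0
  · exact sum_eq_zero fun n hn => by rw [if_neg (by grind), mul_zero]
  · rw [← sum_subset (Icc_subset_Icc_right hm) fun n hn hn' => by
        rw [if_neg (by grind), mul_zero],
      sum_congr rfl fun n hn => by rw [if_pos (mem_Icc.1 hn).2, mul_div_assoc'],
      ← sum_div, ← hconv m (by omega), div_self (hap m).ne']

section Defect

variable {d N : ℕ} {a b : ℕ → ℝ} {S Sstar : Fin d → Module.End ℂ (MvPolynomial (Fin d) ℂ)}
  (hap : ∀ k, 0 < a k)
  (hS : ∀ (j : Fin d) (p : MvPolynomial (Fin d) ℂ), p.totalDegree ≤ N →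
    S j p = ∑ n ∈ Finset.range (N + 1), homogeneousComponent n (X j * p))
  (hSstarMem : ∀ (j : Fin d) (p : MvPolynomial (Fin d) ℂ), p.totalDegree ≤ N →
    (Sstar j p).totalDegree ≤ N)
  (hSstar : ∀ (j : Fin d) (p q : MvPolynomial (Fin d) ℂ),
    p.totalDegree ≤ N → q.totalDegree ≤ N →
    uiInner d a (Sstar j p) q = uiInner d a p (S j q))

include hap hS hSstarMem hSstar in
theorem sum_multinomial_smul_prod_apply_monomial (n : ℕ) {β : Fin d →₀ ℕ} (c : ℂ)
    (hβ : β.degree ≤ N) :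
    ∑ α ∈ Finset.Nat.antidiagonalTuple d n, (Nat.multinomial univ α : ℂ) •
        (List.ofFn fun j => S j ^ α j).prod ((List.ofFn fun j => Sstar j ^ α j).prod (monomial β c)) =
      ((if n ≤ β.degree then a (β.degree - n) / a β.degree else 0 : ℝ) : ℂ) • monomial β c := by
  simp_rw [(raisesBy_prod_ofFn (raisesBy_of_compression hS) _).apply_lowersBy_monomial
    (lowersBy_prod_ofFn hap (lowersBy_of_adjoint hap hS hSstarMem hSstar) _) c hβ, smul_smul,
    ← sum_smul, ← sum_multinomial_mul_uiWeight_div hap]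
  push_cast
  rfl

include hap hS hSstarMem hSstar in
theorem sub_sum_smul_prod_apply_monomial
    (hconv : ∀ m : ℕ, 1 ≤ m → a m = ∑ n ∈ Finset.Icc 1 m, b n * a (m - n))
    {β : Fin d →₀ ℕ} (c : ℂ) (hβ : β.degree ≤ N) :
    monomial β c - ∑ n ∈ Icc 1 N, ((b n : ℝ) : ℂ) • ∑ α ∈ Finset.Nat.antidiagonalTuple d n,
        (Nat.multinomial univ α : ℂ) •
          (List.ofFn fun j => S j ^ α j).prod ((List.ofFn fun j => Sstar j ^ α j).prod (monomial β c)) =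
      homogeneousComponent 0 (monomial β c) := by
  simp_rw [sum_multinomial_smul_prod_apply_monomial hap hS hSstarMem hSstar _ c hβ, smul_smul,
    ← sum_smul, ← Complex.ofReal_mul, ← Complex.ofReal_sum, sum_Icc_mul_ite_div_eq hap hconv hβ,
    homogeneousComponent_monomial, eq_comm (a := 0)]
  split_ifs <;> simp

include hap hS hSstarMem hSstar in
theorem sub_sum_smul_prod_apply
    (hconv : ∀ m : ℕ, 1 ≤ m → a m = ∑ n ∈ Finset.Icc 1 m, b n * a (m - n))
    {p : MvPolynomial (Fin d) ℂ} (hp : p.totalDegree ≤ N) :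
    p - ∑ n ∈ Icc 1 N, ((b n : ℝ) : ℂ) • ∑ α ∈ Finset.Nat.antidiagonalTuple d n,
        (Nat.multinomial univ α : ℂ) •
          (List.ofFn fun j => S j ^ α j).prod ((List.ofFn fun j => Sstar j ^ α j).prod p) =
      homogeneousComponent 0 p := by
  let D : Module.End ℂ (MvPolynomial (Fin d) ℂ) :=
    1 - ∑ n ∈ Icc 1 N, ((b n : ℝ) : ℂ) • ∑ α ∈ Finset.Nat.antidiagonalTuple d n,
      (Nat.multinomial univ α : ℂ) •
        ((List.ofFn fun j => S j ^ α j).prod * (List.ofFn fun j => Sstar j ^ α j).prod)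
  have hD : ∀ q, D q = q - ∑ n ∈ Icc 1 N, ((b n : ℝ) : ℂ) •
      ∑ α ∈ Finset.Nat.antidiagonalTuple d n, (Nat.multinomial univ α : ℂ) •
        (List.ofFn fun j => S j ^ α j).prod ((List.ofFn fun j => Sstar j ^ α j).prod q) := by
    simp [D]
  rw [← hD, p.as_sum, map_sum, map_sum]
  refine sum_congr rfl fun β hβ => ?_
  rw [hD]
  exact sub_sum_smul_prod_apply_monomial hap hS hSstarMem hSstar hconv _
    ((le_totalDegree hβ).trans hp)

end Defect

theorem stmt_18_general (d N : ℕ) (a b : ℕ → ℝ) (hap : ∀ k, 0 < a k)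
    (hconv : ∀ m : ℕ, 1 ≤ m → a m = ∑ n ∈ Finset.Icc 1 m, b n * a (m - n))
    (S Sstar : Fin d → Module.End ℂ (MvPolynomial (Fin d) ℂ))
    (hS : ∀ (j : Fin d) (p : MvPolynomial (Fin d) ℂ), p.totalDegree ≤ N →
      S j p = ∑ n ∈ Finset.range (N + 1),
        MvPolynomial.homogeneousComponent n (MvPolynomial.X j * p))
    (hSstarMem : ∀ (j : Fin d) (p : MvPolynomial (Fin d) ℂ), p.totalDegree ≤ N →
      (Sstar j p).totalDegree ≤ N)
    (hSstar : ∀ (j : Fin d) (p q : MvPolynomial (Fin d) ℂ),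
      p.totalDegree ≤ N → q.totalDegree ≤ N →
      uiInner d a (Sstar j p) q = uiInner d a p (S j q)) :
    ∀ p : MvPolynomial (Fin d) ℂ, p.totalDegree ≤ N →
      (p - ∑ n ∈ Finset.Icc 1 N, ((b n : ℝ) : ℂ) •
          ∑ α ∈ Finset.Nat.antidiagonalTuple d n,
            (Nat.multinomial Finset.univ α : ℂ) •
              ((List.ofFn fun j => S j ^ α j).prod
                ((List.ofFn fun j => Sstar j ^ α j).prod p))
        = MvPolynomial.homogeneousComponent 0 p) ∧
      0 ≤ uiInner d a
          (p - ∑ n ∈ Finset.Icc 1 N, ((b n : ℝ) : ℂ) •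
            ∑ α ∈ Finset.Nat.antidiagonalTuple d n,
              (Nat.multinomial Finset.univ α : ℂ) •
                ((List.ofFn fun j => S j ^ α j).prod
                  ((List.ofFn fun j => Sstar j ^ α j).prod p))) p := by
  intro p hp
  have hdefect := sub_sum_smul_prod_apply hap hS hSstarMem hSstar hconv hp
  exact ⟨hdefect, hdefect ▸ uiInner_homogeneousComponent_zero_nonneg hap p⟩

/-- Let `S` be the compression of the multiplication tuple `M_z` to the space of
polynomials of degree at most `N` (with the unitarily invariant inner product with
weights `aₙ`), and let `Sstar` be its adjoint there. If `aₘ = ∑_{n=1}^m bₙ a_{m-n}`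
for `m ≥ 1`, then `I - ∑_{n=1}^N bₙ ∑_{|α|=n} (n!/α!) Sᵅ (S*)ᵅ` is the orthogonal
projection onto the constants; in particular it is positive semidefinite. -/
theorem stmt_18 (d N : ℕ) (a b : ℕ → ℝ) (ha0 : a 0 = 1) (hap : ∀ k, 0 < a k)
    (hconv : ∀ m : ℕ, 1 ≤ m → a m = ∑ n ∈ Finset.Icc 1 m, b n * a (m - n))
    (S Sstar : Fin d → Module.End ℂ (MvPolynomial (Fin d) ℂ))
    (hS : ∀ (j : Fin d) (p : MvPolynomial (Fin d) ℂ), p.totalDegree ≤ N →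
      S j p = ∑ n ∈ Finset.range (N + 1),
        MvPolynomial.homogeneousComponent n (MvPolynomial.X j * p))
    (hSstarMem : ∀ (j : Fin d) (p : MvPolynomial (Fin d) ℂ), p.totalDegree ≤ N →
      (Sstar j p).totalDegree ≤ N)
    (hSstar : ∀ (j : Fin d) (p q : MvPolynomial (Fin d) ℂ),
      p.totalDegree ≤ N → q.totalDegree ≤ N →
      uiInner d a (Sstar j p) q = uiInner d a p (S j q)) :
    ∀ p : MvPolynomial (Fin d) ℂ, p.totalDegree ≤ N →
      (p - ∑ n ∈ Finset.Icc 1 N, ((b n : ℝ) : ℂ) •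
          ∑ α ∈ Finset.Nat.antidiagonalTuple d n,
            (Nat.multinomial Finset.univ α : ℂ) •
              ((List.ofFn fun j => S j ^ α j).prod
                ((List.ofFn fun j => Sstar j ^ α j).prod p))
        = MvPolynomial.homogeneousComponent 0 p) ∧
      0 ≤ uiInner d a
          (p - ∑ n ∈ Finset.Icc 1 N, ((b n : ℝ) : ℂ) •
            ∑ α ∈ Finset.Nat.antidiagonalTuple d n,
              (Nat.multinomial Finset.univ α : ℂ) •
                ((List.ofFn fun j => S j ^ α j).prod
                  ((List.ofFn fun j => Sstar j ^ α j).prod p))) p :=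
  stmt_18_general d N a b hap hconv S Sstar hS hSstarMem hSstar
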